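/- arXiv:2204.07950 — 7 statements merged into one kernel-verified Lean document; each statement's English description precedes it below -/
import Mathlib

section
/- Let R be a finite commutative ring with unity equipped with the discrete topology, Γ a set with at least two elements, φ: Γ → Γ a map, and w ∈ R^Γ a weight vector. If for every α ∈ Γ either α is quasi-periodic under φ, or α is non-quasi-periodic under φ and there exists n ≥ 0 with w_{φ^n(α)} = 0, then the dynamical system (R^Γ, σ_{φ,w}) is not sensitive. -/
open Function Set

namespace WGShift

variable {Γ R : Type*}

/-- The basic entourage `O_M` determined by a set of coordinates `M ⊆ Γ`. -/
def shiftOM (M : Set Γ) : Set ((Γ → R) × (Γ → R)) :=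
  {p | ∀ α ∈ M, p.1 α = p.2 α}

/-- Entourages of the product uniformity on `Γ → R` (with `R` discrete):
exactly the sets containing some `O_M` with `M` finite. -/
def IsEntourage (O : Set ((Γ → R) × (Γ → R))) : Prop :=
  ∃ M : Set Γ, M.Finite ∧ shiftOM M ⊆ O

/-- The weighted generalized shift `σ_{φ,w}`. -/
def wshift [Mul R] (φ : Γ → Γ) (w : Γ → R) : (Γ → R) → (Γ → R) :=
  fun x α => w α * x (φ α)

/-- `α` is quasi-periodic under `φ` if `φ^i α = φ^j α` for some `i > j ≥ 1`. -/
def IsQuasiPeriodic (φ : Γ → Γ) (α : Γ) : Prop :=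
  ∃ i j : ℕ, 1 ≤ j ∧ j < i ∧ φ^[i] α = φ^[j] α

/-- Sensitivity of `(R^Γ, f)` with respect to the product uniformity. -/
def Sensitive [TopologicalSpace R] (f : (Γ → R) → (Γ → R)) : Prop :=
  ∃ O : Set ((Γ → R) × (Γ → R)), IsEntourage O ∧
    ∀ x : Γ → R, ∀ U : Set (Γ → R), IsOpen U → x ∈ U →
      ∃ y ∈ U, ∃ n : ℕ, (f^[n] x, f^[n] y) ∉ O

/-- Strong sensitivity of `(R^Γ, f)` with respect to the product uniformity. -/
def StronglySensitive [TopologicalSpace R] (f : (Γ → R) → (Γ → R)) : Prop :=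
  ∃ O : Set ((Γ → R) × (Γ → R)), IsEntourage O ∧
    ∀ x : Γ → R, ∀ U : Set (Γ → R), IsOpen U → x ∈ U →
      ∃ y ∈ U, ∃ N : ℕ, ∀ n ≥ N, (f^[n] x, f^[n] y) ∉ O

/-- `x, y` are proximal for `f`. -/
def ProximalPair (f : (Γ → R) → (Γ → R)) (x y : Γ → R) : Prop :=
  ∀ O : Set ((Γ → R) × (Γ → R)), IsEntourage O →
    ∃ n ≥ 1, (f^[n] x, f^[n] y) ∈ O

/-- `x, y` are asymptotic for `f`. -/
def AsymptoticPair (f : (Γ → R) → (Γ → R)) (x y : Γ → R) : Prop :=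
  ∀ O : Set ((Γ → R) × (Γ → R)), IsEntourage O →
    ∃ N ≥ 1, ∀ n ≥ N, (f^[n] x, f^[n] y) ∈ O

/-- A scrambled pair: proximal but not asymptotic. -/
def ScrambledPair (f : (Γ → R) → (Γ → R)) (x y : Γ → R) : Prop :=
  ProximalPair f x y ∧ ¬ AsymptoticPair f x y

/-- Li–Yorke chaos: existence of an uncountable scrambled set. -/
def LiYorkeChaotic (f : (Γ → R) → (Γ → R)) : Prop :=
  ∃ A : Set (Γ → R), ¬ A.Countable ∧
    ∀ x ∈ A, ∀ y ∈ A, x ≠ y → ScrambledPair f x y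

/-- Topological transitivity of `(R^Γ, f)`. -/
def TopTransitive [TopologicalSpace R] (f : (Γ → R) → (Γ → R)) : Prop :=
  ∀ U V : Set (Γ → R), IsOpen U → IsOpen V → U.Nonempty → V.Nonempty →
    ∃ n ≥ 1, (f^[n] '' U ∩ V).Nonempty

/-- The set of periodic points of `f`. -/
def perPoints (f : (Γ → R) → (Γ → R)) : Set (Γ → R) :=
  {x | ∃ n ≥ 1, f^[n] x = x}

/-- Devaney chaos: sensitive, topologically transitive, dense periodic points. -/
def DevaneyChaotic [TopologicalSpace R] (f : (Γ → R) → (Γ → R)) : Prop :=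
  Sensitive f ∧ TopTransitive f ∧ Dense (perPoints f)

open Classical in
/-- The point `x^A ∈ R^Γ` built from `A ⊆ ℕ` along the orbit of `ν`. -/
noncomputable def xA [Zero R] [One R] (φ : Γ → Γ) (ν : Γ) (A : Set ℕ) : Γ → R :=
  fun α => if ∃ p : ℕ, p ∈ A ∧ α = φ^[p * (p + 1) / 2] ν then 1 else 0

end WGShift

open WGShift


lemma wshift_iterate {R Γ : Type*} [CommRing R] (φ : Γ → Γ) (w : Γ → R)
    (n : ℕ) (x : Γ → R) (α : Γ) :
    (wshift φ w)^[n] x α = (∏ k ∈ Finset.range n, w (φ^[k] α)) * x (φ^[n] α) := by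
  induction n generalizing x with
  | zero => simp
  | succ n ih =>
    rw [Function.iterate_succ_apply, ih, Finset.prod_range_succ, wshift,
      Function.iterate_succ_apply']
    ring

lemma orbit_bounded {Γ : Type*} {φ : Γ → Γ} {α : Γ} {i j : ℕ} (hj : j < i)
    (heq : φ^[i] α = φ^[j] α) : ∀ n, ∃ m ≤ i, φ^[n] α = φ^[m] α := by
  intro n
  induction n using Nat.strong_induction_on with
  | _ n ih =>
    rcases le_or_gt n i with hn | hn
    · exact ⟨n, hn, rfl⟩
    · have h1 : φ^[n] α = φ^[n - i + j] α := by
        have hni : n = (n - i) + i := by omega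
        conv_lhs => rw [hni]
        rw [Function.iterate_add_apply, heq, ← Function.iterate_add_apply]
      obtain ⟨m, hm, hm2⟩ := ih (n - i + j) (by omega)
      exact ⟨m, hm, h1.trans hm2⟩

lemma key_lemma {R Γ : Type*} [CommRing R] (φ : Γ → Γ) (w : Γ → R) (α : Γ)
    (h : IsQuasiPeriodic φ α ∨
      (¬ IsQuasiPeriodic φ α ∧ ∃ n : ℕ, w (φ^[n] α) = 0)) :
    ∃ k : ℕ, ∀ x y : Γ → R, (∀ m ≤ k, x (φ^[m] α) = y (φ^[m] α)) →
      ∀ n, (wshift φ w)^[n] x α = (wshift φ w)^[n] y α := by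
  rcases h with ⟨i, j, _, hji, heq⟩ | ⟨_, m, hm⟩
  · refine ⟨i, fun x y hxy n => ?_⟩
    obtain ⟨p, hp, hp2⟩ := orbit_bounded hji heq n
    rw [wshift_iterate, wshift_iterate, hp2, hxy p hp]
  · refine ⟨m, fun x y hxy n => ?_⟩
    rcases le_or_gt n m with hn | hn
    · rw [wshift_iterate, wshift_iterate, hxy n hn]
    · have hz : (∏ k ∈ Finset.range n, w (φ^[k] α)) = 0 :=
        Finset.prod_eq_zero (Finset.mem_range.mpr hn) hm
      rw [wshift_iterate, wshift_iterate, hz, zero_mul, zero_mul]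

theorem stmt0 {R Γ : Type*} [CommRing R] [Fintype R]
    [TopologicalSpace R] [DiscreteTopology R] [Nontrivial Γ]
    (φ : Γ → Γ) (w : Γ → R)
    (h : ∀ α : Γ, IsQuasiPeriodic φ α ∨
      (¬ IsQuasiPeriodic φ α ∧ ∃ n : ℕ, w (φ^[n] α) = 0)) :
    ¬ Sensitive (wshift φ w) := by
  rintro ⟨O, ⟨M, hMfin, hMO⟩, hsens⟩
  choose k hk using fun α => key_lemma φ w α (h α)
  set x : Γ → R := fun _ => 0 with hx
  set S : Set Γ := ⋃ α ∈ M, (fun n : ℕ => φ^[n] α) '' Set.Iic (k α) with hS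
  have hSfin : S.Finite := hMfin.biUnion fun α _ => (Set.finite_Iic _).image _
  set U : Set (Γ → R) := {y | ∀ β ∈ S, y β = x β} with hU
  have hUopen : IsOpen U := by
    have hUe : U = ⋂ β ∈ S, (fun y : Γ → R => y β) ⁻¹' {x β} := by
      ext y; simp [hU, Set.mem_iInter]
    rw [hUe]
    exact hSfin.isOpen_biInter fun β _ =>
      (isOpen_discrete {x β}).preimage (continuous_apply β)
  obtain ⟨y, hyU, n, hn⟩ := hsens x U hUopen (fun β _ => rfl)
  apply hn
  apply hMO
  intro α hα
  exact hk α x y (fun m hm => (hyU (φ^[m] α)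
    (Set.mem_biUnion hα ⟨m, hm, rfl⟩)).symm) n
end

section
/- Let R be a finite field equipped with the discrete topology, Γ a set with at least two elements, φ: Γ → Γ a map, and w ∈ R^Γ a weight vector. Then the dynamical system (R^Γ, σ_{φ,w}) is sensitive if and only if there exists a non-quasi-periodic point θ ∈ Γ of φ such that w_{φ^n(θ)} ≠ 0 for all n ≥ 0. -/
open Function Set

open WGShift

lemma wshift_iter {R Γ : Type*} [Field R] (φ : Γ → Γ) (w : Γ → R)
    (x : Γ → R) : ∀ (n : ℕ) (α : Γ), (wshift φ w)^[n] x α =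
      (∏ k ∈ Finset.range n, w (φ^[k] α)) * x (φ^[n] α) := by
  intro n
  induction n generalizing x with
  | zero => simp
  | succ n ih =>
    intro α
    rw [Function.iterate_succ_apply, ih, Finset.prod_range_succ,
        Function.iterate_succ_apply']
    simp only [wshift]
    ring

lemma qp_orbit_finite {Γ : Type*} (φ : Γ → Γ) (α : Γ) (h : IsQuasiPeriodic φ α) :
    (Set.range fun n : ℕ => φ^[n] α).Finite := by
  obtain ⟨i, j, hj, hji, heq⟩ := h
  have key : ∀ n : ℕ, ∃ m < i, φ^[n] α = φ^[m] α := by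
    intro n
    induction n using Nat.strong_induction_on with
    | _ n ih =>
      rcases lt_or_ge n i with hn | hn
      · exact ⟨n, hn, rfl⟩
      · have hsum : n - i + i = n := Nat.sub_add_cancel hn
        have h1 : φ^[n] α = φ^[n - i + j] α := by
          calc φ^[n] α = φ^[n - i] (φ^[i] α) := by
                rw [← Function.iterate_add_apply, hsum]
            _ = φ^[n - i] (φ^[j] α) := by rw [heq]
            _ = φ^[n - i + j] α := (Function.iterate_add_apply φ _ _ α).symm
        have hlt : n - i + j < n := by omega
        obtain ⟨m, hm, hm2⟩ := ih _ hlt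
        exact ⟨m, hm, h1.trans hm2⟩
  apply Set.Finite.subset ((Set.finite_Iio i).image (fun n => φ^[n] α))
  rintro _ ⟨n, rfl⟩
  obtain ⟨m, hm, hm2⟩ := key n
  exact ⟨m, hm, hm2.symm⟩

lemma nqp_inj {Γ : Type*} (φ : Γ → Γ) (θ : Γ) (h : ¬ IsQuasiPeriodic φ θ) :
    Function.Injective fun n : ℕ => φ^[n] θ := by
  intro a b hab
  simp only at hab
  by_contra hne
  rcases Nat.lt_or_ge a b with hlt | hge
  · exact h ⟨b + 1, a + 1, Nat.succ_le_succ a.zero_le, Nat.succ_lt_succ hlt,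
      by rw [Function.iterate_succ_apply', Function.iterate_succ_apply', hab]⟩
  · have hlt : b < a := lt_of_le_of_ne hge (fun e => hne e.symm)
    exact h ⟨a + 1, b + 1, Nat.succ_le_succ b.zero_le, Nat.succ_lt_succ hlt,
      by rw [Function.iterate_succ_apply', Function.iterate_succ_apply', hab]⟩

theorem stmt3 {R Γ : Type*} [Field R] [Fintype R]
    [TopologicalSpace R] [DiscreteTopology R] [Nontrivial Γ]
    (φ : Γ → Γ) (w : Γ → R) :
    Sensitive (wshift φ w) ↔
      ∃ θ : Γ, ¬ IsQuasiPeriodic φ θ ∧ ∀ n : ℕ, w (φ^[n] θ) ≠ 0 := by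
  constructor
  · -- Sensitive → ∃ θ ...
    intro hsens
    by_contra hno
    push_neg at hno
    have key : ∀ α : Γ, ∃ S : Set Γ, S.Finite ∧
        ∀ n : ℕ, φ^[n] α ∈ S ∨ (∏ k ∈ Finset.range n, w (φ^[k] α)) = 0 := by
      intro α
      by_cases hqp : IsQuasiPeriodic φ α
      · exact ⟨_, qp_orbit_finite φ α hqp, fun n => Or.inl ⟨n, rfl⟩⟩
      · obtain ⟨n₀, hn₀⟩ := hno α hqp
        refine ⟨(fun m : ℕ => φ^[m] α) '' Set.Iic n₀, (Set.finite_Iic n₀).image _,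
          fun n => ?_⟩
        rcases le_or_gt n n₀ with h | h
        · exact Or.inl ⟨n, h, rfl⟩
        · exact Or.inr (Finset.prod_eq_zero (Finset.mem_range.2 h) hn₀)
    choose S hSfin hS using key
    obtain ⟨O, ⟨M, hMfin, hMO⟩, hsen⟩ := hsens
    set T : Set Γ := ⋃ α ∈ M, S α with hT
    have hTfin : T.Finite := hMfin.biUnion fun α _ => hSfin α
    set x : Γ → R := fun _ => 0 with hx
    set U : Set (Γ → R) := T.pi (fun γ => {x γ}) with hU
    have hopen : IsOpen U := isOpen_set_pi hTfin fun a _ => isOpen_discrete _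
    have hxU : x ∈ U := fun a _ => rfl
    obtain ⟨y, hyU, n, hn⟩ := hsen x U hopen hxU
    apply hn
    apply hMO
    intro α hα
    show (wshift φ w)^[n] x α = (wshift φ w)^[n] y α
    rw [wshift_iter, wshift_iter]
    rcases hS α n with hin | hzero
    · have : y (φ^[n] α) = x (φ^[n] α) :=
        hyU (φ^[n] α) (Set.mem_biUnion hα hin)
      rw [this]
    · rw [hzero, zero_mul, zero_mul]
  · -- ← direction
    rintro ⟨θ, hqp, hw⟩
    classical
    refine ⟨shiftOM {θ}, ⟨{θ}, Set.finite_singleton θ, subset_rfl⟩, ?_⟩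
    intro x U hUopen hxU
    obtain ⟨I, u, hu, hsub⟩ := isOpen_pi_iff.1 hUopen x hxU
    have hinf : (Set.range fun n : ℕ => φ^[n] θ).Infinite :=
      Set.infinite_range_of_injective (nqp_inj φ θ hqp)
    obtain ⟨γ, hγr, hγI⟩ := (hinf.diff I.finite_toSet).nonempty
    obtain ⟨n, rfl⟩ := hγr
    set y : Γ → R := Function.update x (φ^[n] θ) (x (φ^[n] θ) + 1) with hy
    refine ⟨y, hsub ?_, n, ?_⟩
    · intro a ha
      have hγI' : φ^[n] θ ∉ (I : Set Γ) := hγI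
      have hne : a ≠ φ^[n] θ := fun e => hγI' (e ▸ ha)
      rw [hy]
      simp only [Function.update_of_ne hne]
      exact (hu a ha).2
    · intro hmem
      have heq : (wshift φ w)^[n] x θ = (wshift φ w)^[n] y θ :=
        hmem θ (Set.mem_singleton θ)
      rw [wshift_iter, wshift_iter] at heq
      have hc : (∏ k ∈ Finset.range n, w (φ^[k] θ)) ≠ 0 :=
        Finset.prod_ne_zero_iff.2 fun k _ => hw k
      have hyv : y (φ^[n] θ) = x (φ^[n] θ) + 1 := by
        rw [hy, Function.update_self]
      rw [hyv] at heq
      have := mul_left_cancel₀ hc heq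
      simp at this
end

section
/- Let R = ℤ/4ℤ with the discrete topology, Γ = ℕ, ψ: ℕ → ℕ defined by ψ(n) = n+1, and v = (v_n)_{n∈ℕ} with v_n = 2 (mod 4) for all n. Then the point 1 is non-quasi-periodic under ψ and v_{ψ^n(1)} ≠ 0 for all n ≥ 0, yet for every x ∈ (ℤ/4ℤ)^ℕ and every k ≥ 2 one has σ_{ψ,v}^k(x) = (0)_{n∈ℕ}; consequently the dynamical system ((ℤ/4ℤ)^ℕ, σ_{ψ,v}) is not strongly sensitive. -/
open Function Set

open WGShift

theorem stmt5 [TopologicalSpace (ZMod 4)] [DiscreteTopology (ZMod 4)]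
    (ψ : ℕ → ℕ) (hψ : ∀ n, ψ n = n + 1)
    (v : ℕ → ZMod 4) (hv : ∀ n, v n = 2) :
    ¬ IsQuasiPeriodic ψ 1 ∧
    (∀ n : ℕ, v (ψ^[n] 1) ≠ 0) ∧
    (∀ x : ℕ → ZMod 4, ∀ k : ℕ, 2 ≤ k → (wshift ψ v)^[k] x = fun _ => 0) ∧
    ¬ StronglySensitive (wshift ψ v) := by
  have hiter : ∀ (n a : ℕ), ψ^[n] a = a + n := by
    intro n
    induction n with
    | zero => intro a; simp
    | succ m ih =>
      intro a
      rw [Function.iterate_succ_apply, hψ, ih]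
      omega
  have hzero : ∀ x : ℕ → ZMod 4, ∀ k : ℕ, 2 ≤ k → (wshift ψ v)^[k] x = fun _ => 0 := by
    intro x k hk
    obtain ⟨m, rfl⟩ : ∃ m, k = m + 2 := ⟨k - 2, by omega⟩
    rw [Function.iterate_add_apply]
    have h2 : (wshift ψ v)^[2] x = fun _ => 0 := by
      funext α
      simp only [Function.iterate_succ_apply, Function.iterate_zero_apply, wshift, hv]
      rw [← mul_assoc, show (2 : ZMod 4) * 2 = 0 from by decide, zero_mul]
    rw [h2]
    induction m with
    | zero => rfl
    | succ p ih =>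
      rw [Function.iterate_succ_apply, show wshift ψ v (fun _ => 0) = fun _ => 0 by
        funext α; simp [wshift], ih (by omega)]
  refine ⟨?_, ?_, hzero, ?_⟩
  · rintro ⟨i, j, hj, hji, h⟩
    rw [hiter, hiter] at h
    omega
  · intro n
    rw [hv]
    decide
  · rintro ⟨O, ⟨M, hM, hMO⟩, hsens⟩
    obtain ⟨y, -, N, hN⟩ := hsens (fun _ => 0) Set.univ isOpen_univ (Set.mem_univ _)
    exact hN (N + 2) (by omega) (hMO (fun α _ => by
      rw [hzero _ _ (by omega), hzero _ _ (by omega)]))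
end

section
/- Let R be a finite field equipped with the discrete topology, Γ a set with at least two elements, φ: Γ → Γ a map, and w ∈ R^Γ a weight vector. Suppose ν ∈ Γ is a non-quasi-periodic point of φ with w_{φ^n(ν)} ≠ 0 for all n ≥ 0. If M is a finite subset of the ∼_φ-equivalence class of ν and E, F ⊆ ℕ∪{0} are arbitrary, then the set T_M = {n ≥ 1 : (σ_{φ,w}^n(x^E), σ_{φ,w}^n(x^F)) ∈ O_M} is infinite, where O_M = {(x,y) ∈ R^Γ × R^Γ : x_α = y_α for all α ∈ M}. -/
open Function Set

open WGShift

/-- Triangular number helper. -/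
private def tri (q : ℕ) : ℕ := q * (q + 1) / 2

private lemma tri_succ (q : ℕ) : tri (q + 1) = tri q + (q + 1) := by
  have h : (q + 1) * (q + 1 + 1) = q * (q + 1) + 2 * (q + 1) := by ring
  have he : 2 ∣ q * (q + 1) := (Nat.even_mul_succ_self q).two_dvd
  unfold tri
  omega

private lemma tri_ge (q : ℕ) : q ≤ tri q := by
  induction q with
  | zero => simp [tri]
  | succ q ih => rw [tri_succ]; omega

private lemma tri_mono : Monotone tri :=
  monotone_nat_of_le_succ fun q => by rw [tri_succ]; omega

private lemma orbit_inj {Γ : Type*} (φ : Γ → Γ) (ν : Γ)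
    (hν : ¬ WGShift.IsQuasiPeriodic φ ν) :
    ∀ i j : ℕ, φ^[i] ν = φ^[j] ν → i = j := by
  intro i j h
  have h1 : φ^[i + 1] ν = φ^[j + 1] ν := by
    rw [Function.iterate_succ_apply', Function.iterate_succ_apply']
    exact congrArg φ h
  rcases Nat.lt_trichotomy i j with hlt | heq | hgt
  · exact absurd ⟨j + 1, i + 1, by omega, by omega, h1.symm⟩ hν
  · exact heq
  · exact absurd ⟨i + 1, j + 1, by omega, by omega, h1⟩ hν

private lemma iter_eq {Γ R : Type*} [Mul R] (φ : Γ → Γ) (w : Γ → R) :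
    ∀ (n : ℕ) (x y : Γ → R) (α : Γ), x (φ^[n] α) = y (φ^[n] α) →
      (WGShift.wshift φ w)^[n] x α = (WGShift.wshift φ w)^[n] y α := by
  intro n
  induction n with
  | zero => intro x y α h; simpa using h
  | succ n ih =>
      intro x y α h
      rw [Function.iterate_succ_apply, Function.iterate_succ_apply]
      apply ih
      rw [Function.iterate_succ_apply'] at h
      show w (φ^[n] α) * x (φ (φ^[n] α)) = w (φ^[n] α) * y (φ (φ^[n] α))
      rw [h]

theorem stmt8 {R Γ : Type*} [Field R] [Fintype R]
    [TopologicalSpace R] [DiscreteTopology R] [Nontrivial Γ]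
    (φ : Γ → Γ) (w : Γ → R) (ν : Γ)
    (hν : ¬ IsQuasiPeriodic φ ν) (hw : ∀ n : ℕ, w (φ^[n] ν) ≠ 0)
    (M : Set Γ) (hMfin : M.Finite)
    (hM : ∀ α ∈ M, ∃ n m : ℕ, φ^[n] α = φ^[m] ν)
    (E F : Set ℕ) :
    {n : ℕ | 1 ≤ n ∧
      ((wshift φ w)^[n] (xA φ ν E), (wshift φ w)^[n] (xA φ ν F)) ∈
        (shiftOM M : Set ((Γ → R) × (Γ → R)))}.Infinite := by
  classical
  choose! nn mm hnm using hM
  have hinj : ∀ i j : ℕ, φ^[i] ν = φ^[j] ν → i = j := orbit_inj φ ν hν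
  set N0 := hMfin.toFinset.sup nn with hN0
  set Cm := hMfin.toFinset.sup mm with hCm
  have hnle : ∀ α ∈ M, nn α ≤ N0 := fun α hα =>
    Finset.le_sup (hMfin.mem_toFinset.mpr hα)
  have hmle : ∀ α ∈ M, mm α ≤ Cm := fun α hα =>
    Finset.le_sup (hMfin.mem_toFinset.mpr hα)
  apply Set.infinite_of_not_bddAbove
  rw [not_bddAbove_iff]
  intro a
  set p := max a (N0 + Cm + 1) with hp
  set n := tri p + N0 + 1 with hndef
  have hpa : a ≤ p := le_max_left _ _
  have hpc : N0 + Cm + 1 ≤ p := le_max_right _ _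
  have htp := tri_ge p
  refine ⟨n, ⟨by omega, ?_⟩, by omega⟩
  intro α hα
  apply iter_eq
  have hle := hnle α hα
  have hkey : φ^[n] α = φ^[(n - nn α) + mm α] ν := by
    conv_lhs => rw [show n = (n - nn α) + nn α by omega]
    rw [Function.iterate_add_apply, hnm α hα, ← Function.iterate_add_apply]
  set s := (n - nn α) + mm α with hs
  have hs1 : tri p < s := by omega
  have hs2 : s < tri (p + 1) := by
    rw [tri_succ]
    have := hmle α hα
    omega
  have notTri : ∀ q : ℕ, tri q ≠ s := by
    intro q hq
    rcases le_or_gt q p with h | h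
    · have := tri_mono h; omega
    · have := tri_mono (show p + 1 ≤ q from h); omega
  rw [hkey]
  have hz : ∀ A : Set ℕ, xA φ ν A (φ^[s] ν) = (0 : R) := by
    intro A
    unfold xA
    rw [if_neg]
    rintro ⟨q, hqA, hq⟩
    exact notTri q (hinj _ _ hq.symm)
  rw [hz E, hz F]
end

section
/- Let R be a finite field equipped with the discrete topology, Γ a set with at least two elements, φ: Γ → Γ a map, and w ∈ R^Γ a weight vector. If the dynamical system (R^Γ, σ_{φ,w}) has at least one scrambled pair, then there exists a non-quasi-periodic point θ ∈ Γ of φ such that w_{φ^n(θ)} ≠ 0 for all n ≥ 0. -/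
/-!
Since `(σⁿ x)(α) = (∏_{k<n} w (φᵏ α)) · x (φⁿ α)`, a pair that is not asymptotic differs, at some
coordinate `θ`, at infinitely many times `n`; each such difference forces `w (φᵏ θ) ≠ 0` for `k < n`.
If `θ` were quasi-periodic its orbit would be finite, so proximality would give one time `m` at
which `σᵐ x` and `σᵐ y` agree on the whole orbit; cancelling the nonzero weights, `x` and `y` agree
at every `φⁿ θ` with `n ≥ m`, and hence `σⁿ x` and `σⁿ y` agree at `θ` for all `n ≥ m`.
-/

open Function Set

open WGShift

open Filter

namespace WGShift

variable {Γ R : Type*} {φ : Γ → Γ}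

theorem IsQuasiPeriodic.finite_range_iterate {α : Γ} (hα : IsQuasiPeriodic φ α) :
    (range fun n => φ^[n] α).Finite := by
  obtain ⟨i, j, -, hji, hij⟩ := hα
  refine ((finite_Iio i).image fun n => φ^[n] α).subset ?_
  rintro _ ⟨n, rfl⟩
  induction n using Nat.strong_induction_on with
  | _ n ih =>
    by_cases hn : n < i
    · exact ⟨n, hn, rfl⟩
    · have hshift : φ^[n] α = φ^[n - i + j] α := by
        rw [← Nat.sub_add_cancel (not_lt.1 hn), iterate_add_apply, hij, ← iterate_add_apply,
          Nat.add_sub_cancel]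
      simpa only [hshift] using ih _ (by omega)

theorem exists_frequently_iterate_apply_ne_of_not_asymptoticPair
    {f : (Γ → R) → (Γ → R)} {x y : Γ → R} (h : ¬ AsymptoticPair f x y) :
    ∃ α, ∃ᶠ n in atTop, f^[n] x α ≠ f^[n] y α := by
  contrapose! h
  rintro O ⟨M, hM, hMO⟩
  have hagree : ∀ᶠ n in atTop, ∀ α ∈ M, f^[n] x α = f^[n] y α :=
    (hM.eventually_all (l := atTop)).2 fun α _ => h α
  obtain ⟨N, hN⟩ := eventually_atTop.1 hagree
  exact ⟨N + 1, by omega, fun n hn => hMO (hN n (by omega))⟩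

variable {w : Γ → R}

theorem iterate_wshift_apply [CommMonoid R] (n : ℕ) (x : Γ → R) (α : Γ) :
    (wshift φ w)^[n] x α = (∏ k ∈ Finset.range n, w (φ^[k] α)) * x (φ^[n] α) := by
  induction n generalizing x with
  | zero => simp
  | succ n ih =>
    rw [iterate_succ_apply, ih, Finset.prod_range_succ, iterate_succ_apply', wshift, mul_assoc]

theorem iterate_wshift_apply_eq_iff [CommMonoidWithZero R] [IsCancelMulZero R] {α : Γ}
    (hw : ∀ k, w (φ^[k] α) ≠ 0) (n : ℕ) (x y : Γ → R) :
    (wshift φ w)^[n] x α = (wshift φ w)^[n] y α ↔ x (φ^[n] α) = y (φ^[n] α) := by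
  have : Nontrivial R := ⟨⟨_, _, hw 0⟩⟩
  rw [iterate_wshift_apply, iterate_wshift_apply]
  exact mul_right_inj' (Finset.prod_ne_zero_iff.2 fun k _ => hw k)

theorem weight_iterate_ne_zero_of_frequently_ne [CommMonoidWithZero R] {α : Γ} {x y : Γ → R}
    (h : ∃ᶠ n in atTop, (wshift φ w)^[n] x α ≠ (wshift φ w)^[n] y α) (k : ℕ) :
    w (φ^[k] α) ≠ 0 := by
  intro hk
  obtain ⟨n, hne, hkn⟩ := (h.and_eventually (eventually_gt_atTop k)).exists
  have hprod : ∏ l ∈ Finset.range n, w (φ^[l] α) = 0 :=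
    Finset.prod_eq_zero (Finset.mem_range.2 hkn) hk
  exact hne (by rw [iterate_wshift_apply, iterate_wshift_apply, hprod, zero_mul, zero_mul])

theorem ProximalPair.eventually_iterate_wshift_apply_eq [CommMonoidWithZero R]
    [IsCancelMulZero R] {α : Γ} {x y : Γ → R} (hxy : ProximalPair (wshift φ w) x y)
    (hα : (range fun n => φ^[n] α).Finite) (hw : ∀ k, w (φ^[k] α) ≠ 0) :
    ∀ᶠ n in atTop, (wshift φ w)^[n] x α = (wshift φ w)^[n] y α := by
  obtain ⟨m, -, hm⟩ := hxy _ ⟨_, hα, subset_rfl⟩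
  filter_upwards [eventually_ge_atTop m] with n hn
  have hwβ : ∀ k, w (φ^[k] (φ^[n - m] α)) ≠ 0 := fun k => by
    rw [← iterate_add_apply]
    exact hw _
  rw [iterate_wshift_apply_eq_iff hw, ← Nat.sub_add_cancel hn, add_comm, iterate_add_apply,
    ← iterate_wshift_apply_eq_iff hwβ]
  exact hm _ (mem_range_self _)

end WGShift

theorem stmt11_general {R Γ : Type*} [Field R]
    (φ : Γ → Γ) (w : Γ → R)
    (h : ∃ x y : Γ → R, ScrambledPair (wshift φ w) x y) :
    ∃ θ : Γ, ¬ IsQuasiPeriodic φ θ ∧ ∀ n : ℕ, w (φ^[n] θ) ≠ 0 := by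
  obtain ⟨x, y, hprox, hnasym⟩ := h
  obtain ⟨θ, hne⟩ := exists_frequently_iterate_apply_ne_of_not_asymptoticPair hnasym
  have hw := weight_iterate_ne_zero_of_frequently_ne hne
  refine ⟨θ, fun hθ => ?_, hw⟩
  have heq := ProximalPair.eventually_iterate_wshift_apply_eq hprox hθ.finite_range_iterate hw
  obtain ⟨n, hn, hn'⟩ := (hne.and_eventually heq).exists
  exact hn hn'

theorem stmt11 {R Γ : Type*} [Field R] [Fintype R]
    [TopologicalSpace R] [DiscreteTopology R] [Nontrivial Γ]
    (φ : Γ → Γ) (w : Γ → R)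
    (h : ∃ x y : Γ → R, ScrambledPair (wshift φ w) x y) :
    ∃ θ : Γ, ¬ IsQuasiPeriodic φ θ ∧ ∀ n : ℕ, w (φ^[n] θ) ≠ 0 :=
  stmt11_general φ w h
end

section
/- Let R be a finite field equipped with the discrete topology, Γ a set with at least two elements, φ: Γ → Γ a map, and w ∈ R^Γ a weight vector. Then the dynamical system (R^Γ, σ_{φ,w}) is sensitive if and only if it is Li–Yorke chaotic. -/
open Function Set

open WGShift

/-!
Both properties are equivalent to the existence of a point `ν` with an infinite orbit along
which no weight vanishes.

Such a point makes the shift sensitive: changing a coordinate `φ^[n] ν` far out on the orbit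
leaves a given basic neighbourhood, and after `n` steps the change reaches the coordinate `ν`
multiplied by a nonzero weight. It also makes the shift Li–Yorke chaotic: the points `xA φ ν A`
are pairwise proximal, because the gaps between triangular numbers eventually exceed any
bounded shift between the orbits of finitely many coordinates and the orbit of `ν`; and they are
not asymptotic when `A \ B` is infinite. The sets of codes of the finite prefixes of the maps
`ℕ → Bool` form an uncountable family of such sets `A`.

Without such a point, each coordinate `α` draws on only finitely many coordinates: the
iterates of `α` are eventually periodic, or a weight along the orbit of `α` vanishes. Hence
`0` is a point of equicontinuity, and a proximal pair agrees eventually along every orbit that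
carries nonzero weights, so it is asymptotic.
-/

namespace WGShift

variable {Γ R : Type*}

section Orbits

variable {f : Γ → Γ} {a b : Γ}

theorem injective_iterate_iff_not_isQuasiPeriodic :
    Injective (fun n : ℕ => f^[n] a) ↔ ¬ IsQuasiPeriodic f a := by
  constructor
  · rintro hinj ⟨i, j, -, hji, hij⟩
    exact hji.ne' (hinj hij)
  · intro hqp i j hij
    by_contra hne
    wlog hlt : i < j generalizing i j
    · exact this hij.symm (Ne.symm hne) (by omega)
    refine hqp ⟨j + 1, i + 1, by omega, by omega, ?_⟩
    simp only [iterate_succ_apply'] at hij ⊢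
    rw [hij]

theorem exists_lt_iterate_eq_of_not_injective (h : ¬ Injective (fun n : ℕ => f^[n] a)) :
    ∃ i j : ℕ, i < j ∧ f^[i] a = f^[j] a := by
  obtain ⟨i, j, hij, hne⟩ := not_injective_iff.mp h
  rcases hne.lt_or_gt with hlt | hlt
  · exact ⟨i, j, hlt, hij⟩
  · exact ⟨j, i, hlt, hij.symm⟩

theorem exists_iterate_eq_of_iterate_eq {i j : ℕ} (hij : i < j) (h : f^[i] a = f^[j] a)
    {n m : ℕ} (hnm : n ≤ m) : ∃ k, n ≤ k ∧ k < n + j ∧ f^[m] a = f^[k] a := by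
  by_cases hm : m < n + j
  · exact ⟨m, hnm, hm, rfl⟩
  have hper : IsPeriodicPt f (j - i) (f^[n + i] a) := by
    have h' : IsPeriodicPt f (j - i) (f^[i] a) := by
      rw [IsPeriodicPt, IsFixedPt, ← iterate_add_apply, Nat.sub_add_cancel hij.le, ← h]
    simpa only [← iterate_add_apply, add_comm n i] using h'.apply_iterate n
  refine ⟨n + i + (m - (n + i)) % (j - i), by omega, ?_, ?_⟩
  · have := Nat.mod_lt (m - (n + i)) (by omega : 0 < j - i)
    omega
  · rw [add_comm (n + i), iterate_add_apply, hper.iterate_mod_apply, ← iterate_add_apply,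
      Nat.sub_add_cancel (by omega)]

theorem exists_offset_of_injective_iterate (hinj : Injective (fun n : ℕ => f^[n] b)) (a : Γ) :
    ∃ c d : ℕ, ∀ n m : ℕ, f^[n] a = f^[m] b → n + c = m + d := by
  by_cases hmeet : ∃ n₀ m₀ : ℕ, f^[n₀] a = f^[m₀] b
  · obtain ⟨n₀, m₀, h₀⟩ := hmeet
    refine ⟨m₀, n₀, fun n m h => ?_⟩
    wlog hle : n₀ ≤ n generalizing n₀ m₀ n m
    · have := this n m h n₀ m₀ h₀ (by omega)
      omega
    have hshift : f^[n] a = f^[n - n₀ + m₀] b := by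
      rw [iterate_add_apply, ← h₀, ← iterate_add_apply, Nat.sub_add_cancel hle]
    have := hinj (hshift.symm.trans h)
    omega
  · push Not at hmeet
    exact ⟨0, 0, fun n m h => absurd h (hmeet n m)⟩

end Orbits

-- `xA` is written with `p * (p + 1) / 2`, which unfolds to `tri p`.
def tri (p : ℕ) : ℕ := p * (p + 1) / 2

theorem tri_succ (p : ℕ) : tri (p + 1) = tri p + (p + 1) := by
  have h : (p + 1) * (p + 1 + 1) = p * (p + 1) + (p + 1) * 2 := by ring
  rw [tri, tri, h, Nat.add_mul_div_right _ _ two_pos]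

theorem tri_strictMono : StrictMono tri :=
  strictMono_nat_of_lt_succ fun p => by rw [tri_succ]; omega

theorem self_le_tri (p : ℕ) : p ≤ tri p :=
  tri_strictMono.le_apply

section IterateFormula

def orbitWeight [CommMonoid R] (φ : Γ → Γ) (w : Γ → R) (n : ℕ) (α : Γ) : R :=
  ∏ i ∈ Finset.range n, w (φ^[i] α)

theorem wshift_iterate_apply [CommMonoid R] (φ : Γ → Γ) (w : Γ → R) (n : ℕ) (x : Γ → R)
    (α : Γ) : (wshift φ w)^[n] x α = orbitWeight φ w n α * x (φ^[n] α) := by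
  induction n generalizing x with
  | zero => simp [orbitWeight]
  | succ n ih =>
    rw [iterate_succ_apply, ih, orbitWeight, orbitWeight, Finset.prod_range_succ]
    simp only [wshift, iterate_succ_apply', mul_assoc]

variable [CommMonoidWithZero R] [NoZeroDivisors R] [Nontrivial R] {φ : Γ → Γ} {w : Γ → R}

theorem orbitWeight_ne_zero_iff {n : ℕ} {α : Γ} :
    orbitWeight φ w n α ≠ 0 ↔ ∀ i < n, w (φ^[i] α) ≠ 0 := by
  simp [orbitWeight, Finset.prod_ne_zero_iff]

theorem orbitWeight_iterate_ne_zero {α : Γ} (hw : ∀ i, w (φ^[i] α) ≠ 0) (n j : ℕ) :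
    orbitWeight φ w n (φ^[j] α) ≠ 0 :=
  orbitWeight_ne_zero_iff.mpr fun i _ => by rw [← iterate_add_apply]; exact hw (i + j)

theorem finite_image_iterate_orbitWeight_ne_zero {α : Γ}
    (hqp : (∀ i, w (φ^[i] α) ≠ 0) → ¬ Injective fun n : ℕ => φ^[n] α) :
    ((fun n => φ^[n] α) '' {n | orbitWeight φ w n α ≠ 0}).Finite := by
  by_cases hw : ∀ i, w (φ^[i] α) ≠ 0
  · obtain ⟨i, j, hij, h⟩ := exists_lt_iterate_eq_of_not_injective (hqp hw)
    refine ((finite_Iio j).image fun k => φ^[k] α).subset ?_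
    rintro _ ⟨m, -, rfl⟩
    obtain ⟨k, -, hk, hmk⟩ := exists_iterate_eq_of_iterate_eq hij h (Nat.zero_le m)
    exact ⟨k, by simpa using hk, hmk.symm⟩
  · push Not at hw
    obtain ⟨i, hi⟩ := hw
    refine ((finite_Iic i).subset fun n hn => ?_).image _
    by_contra hni
    exact orbitWeight_ne_zero_iff.mp hn i (by simpa using hni) hi

end IterateFormula

theorem wshift_iterate_apply_eq_iff [CommRing R] [IsDomain R] {φ : Γ → Γ} {w : Γ → R}
    {n : ℕ} {α : Γ} (hW : orbitWeight φ w n α ≠ 0) {x y : Γ → R} :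
    (wshift φ w)^[n] x α = (wshift φ w)^[n] y α ↔ x (φ^[n] α) = y (φ^[n] α) := by
  rw [wshift_iterate_apply, wshift_iterate_apply, mul_right_inj' hW]


section Sensitivity

variable [CommRing R] [IsDomain R] [TopologicalSpace R] {φ : Γ → Γ} {w : Γ → R}

theorem sensitive_wshift_of_injective {ν : Γ} (hw : ∀ i, w (φ^[i] ν) ≠ 0)
    (hinj : Injective fun n : ℕ => φ^[n] ν) : Sensitive (wshift φ w) := by
  classical
  refine ⟨shiftOM {ν}, ⟨{ν}, finite_singleton ν, subset_rfl⟩, fun x U hU hxU => ?_⟩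
  obtain ⟨I, u, hI, hIU⟩ := isOpen_pi_iff.mp hU x hxU
  obtain ⟨n, hn⟩ := (I.finite_toSet.preimage hinj.injOn).infinite_compl.nonempty
  refine ⟨update x (φ^[n] ν) (x (φ^[n] ν) + 1), hIU fun β hβ => ?_, n, fun hmem => ?_⟩
  · rw [update_of_ne (show β ≠ φ^[n] ν by rintro rfl; exact hn hβ)]
    exact (hI β hβ).2
  · have hW : orbitWeight φ w n ν ≠ 0 := orbitWeight_ne_zero_iff.mpr fun i _ => hw i
    have := (wshift_iterate_apply_eq_iff hW).mp (hmem ν rfl)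
    simp at this

theorem exists_injective_iterate_of_sensitive_wshift [DiscreteTopology R]
    (hs : Sensitive (wshift φ w)) :
    ∃ ν, (∀ i, w (φ^[i] ν) ≠ 0) ∧ Injective fun n : ℕ => φ^[n] ν := by
  by_contra! hqp
  obtain ⟨O, ⟨M, hM, hMO⟩, hsens⟩ := hs
  set L := ⋃ α ∈ M, (fun n => φ^[n] α) '' {n | orbitWeight φ w n α ≠ 0}
  have hU : IsOpen {y : Γ → R | ∀ β ∈ L, y β = 0} := by
    simp only [ofPred_forall]
    exact (hM.biUnion fun α _ => finite_image_iterate_orbitWeight_ne_zero (hqp α)).isOpen_biInter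
      fun β _ => (isOpen_discrete {0}).preimage (continuous_apply β)
  obtain ⟨y, hy, n, hn⟩ := hsens 0 _ hU fun _ _ => rfl
  refine hn (hMO fun α hα => ?_)
  show (wshift φ w)^[n] 0 α = (wshift φ w)^[n] y α
  rw [wshift_iterate_apply, wshift_iterate_apply, Pi.zero_apply, mul_zero]
  by_cases hW : orbitWeight φ w n α = 0
  · rw [hW, zero_mul]
  · rw [hy _ (mem_biUnion hα ⟨n, hW, rfl⟩), mul_zero]

theorem sensitive_wshift_iff [DiscreteTopology R] :
    Sensitive (wshift φ w) ↔ ∃ ν, (∀ i, w (φ^[i] ν) ≠ 0) ∧ ¬ IsQuasiPeriodic φ ν := by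
  simp only [← injective_iterate_iff_not_isQuasiPeriodic]
  exact ⟨exists_injective_iterate_of_sensitive_wshift,
    fun ⟨_, hw, hinj⟩ => sensitive_wshift_of_injective hw hinj⟩

end Sensitivity

section LiYorke

variable {φ : Γ → Γ} {ν : Γ}

theorem xA_apply_iterate_tri_of_mem [Zero R] [One R] {A : Set ℕ} {p : ℕ} (hp : p ∈ A) :
    xA (R := R) φ ν A (φ^[tri p] ν) = 1 :=
  if_pos ⟨p, hp, rfl⟩

theorem xA_apply_iterate_tri_of_notMem [Zero R] [One R] (hinj : Injective fun n : ℕ => φ^[n] ν)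
    {A : Set ℕ} {p : ℕ} (hp : p ∉ A) : xA (R := R) φ ν A (φ^[tri p] ν) = 0 :=
  if_neg fun ⟨_, hq, h⟩ => hp (tri_strictMono.injective (hinj h) ▸ hq)

theorem xA_apply_of_forall_ne [Zero R] [One R] {A : Set ℕ} {β : Γ}
    (h : ∀ p, β ≠ φ^[tri p] ν) : xA (R := R) φ ν A β = 0 :=
  if_neg fun ⟨p, _, hp⟩ => h p hp

theorem exists_iterate_ne_iterate_tri (hinj : Injective fun n : ℕ => φ^[n] ν) {M : Set Γ}
    (hM : M.Finite) : ∃ n ≥ 1, ∀ α ∈ M, ∀ p, φ^[n] α ≠ φ^[tri p] ν := by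
  choose c d hcd using exists_offset_of_injective_iterate hinj
  obtain ⟨D, hD⟩ := (hM.image fun α => c α + d α).bddAbove
  -- each orbit from `M` runs along that of `ν` with a shift of at most `D`, while the gap
  -- between `tri (2 * D + 2)` and `tri (2 * D + 3)` is longer than `2 * D + 2`
  refine ⟨tri (2 * D + 2) + D + 1, by omega, fun α hα p hp => ?_⟩
  have hoff := hcd α _ _ hp
  have hcdD : c α + d α ≤ D := hD (mem_image_of_mem _ hα)
  have hlo := tri_strictMono.lt_iff_lt.mp (show tri (2 * D + 2) < tri p by omega)
  have hhi := tri_strictMono.lt_iff_lt.mp (show tri p < tri (2 * D + 2 + 1) by rw [tri_succ]; omega)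
  omega

theorem proximalPair_xA [CommMonoidWithZero R] {w : Γ → R}
    (hinj : Injective fun n : ℕ => φ^[n] ν) (A B : Set ℕ) :
    ProximalPair (wshift φ w) (xA φ ν A) (xA φ ν B) := by
  rintro O ⟨M, hM, hMO⟩
  obtain ⟨n, hn, hne⟩ := exists_iterate_ne_iterate_tri hinj hM
  refine ⟨n, hn, hMO fun α hα => ?_⟩
  show (wshift φ w)^[n] _ α = (wshift φ w)^[n] _ α
  rw [wshift_iterate_apply, wshift_iterate_apply, xA_apply_of_forall_ne (hne α hα),
    xA_apply_of_forall_ne (hne α hα)]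

theorem not_asymptoticPair_xA [CommRing R] [IsDomain R] {w : Γ → R}
    (hw : ∀ i, w (φ^[i] ν) ≠ 0) (hinj : Injective fun n : ℕ => φ^[n] ν) {A B : Set ℕ}
    (hAB : (A \ B).Infinite) : ¬ AsymptoticPair (wshift φ w) (xA φ ν A) (xA φ ν B) := by
  intro h
  obtain ⟨N, -, hN⟩ := h (shiftOM {ν}) ⟨{ν}, finite_singleton ν, subset_rfl⟩
  obtain ⟨p, ⟨hpA, hpB⟩, hpN⟩ := hAB.exists_gt N
  have hW : orbitWeight φ w (tri p) ν ≠ 0 := orbitWeight_ne_zero_iff.mpr fun i _ => hw i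
  have := (wshift_iterate_apply_eq_iff hW).mp (hN (tri p) (hpN.le.trans (self_le_tri p)) ν rfl)
  rw [xA_apply_iterate_tri_of_mem hpA, xA_apply_iterate_tri_of_notMem hinj hpB] at this
  exact one_ne_zero this

def prefixCodes (f : ℕ → Bool) : Set ℕ :=
  range fun n => Encodable.encode ((List.range n).map f)

theorem infinite_prefixCodes_diff {f g : ℕ → Bool} (hfg : f ≠ g) :
    (prefixCodes f \ prefixCodes g).Infinite := by
  obtain ⟨i, hi⟩ := ne_iff.mp hfg
  have hinj : Injective fun n => Encodable.encode ((List.range n).map f) := fun a b hab => by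
    simpa using congrArg List.length (Encodable.encode_injective hab)
  refine ((Ioi_infinite i).image hinj.injOn).mono ?_
  rintro _ ⟨n, hin, rfl⟩
  refine ⟨⟨n, rfl⟩, ?_⟩
  rintro ⟨m, hm⟩
  have hlists := Encodable.encode_injective hm
  obtain rfl : m = n := by simpa using congrArg List.length hlists
  have := congrArg (·[i]?) hlists
  simp only [List.getElem?_map, List.getElem?_range (mem_Ioi.mp hin), Option.map_some,
    Option.some_inj] at this
  exact hi this.symm

theorem uncountable_nat_to_bool : Uncountable (ℕ → Bool) := by
  rw [← not_countable_iff, ← Cardinal.mk_le_aleph0_iff, Cardinal.mk_arrow, Cardinal.mk_bool]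
  simpa using Cardinal.aleph0_lt_continuum.not_ge

theorem not_countable_range_of_injective {ι α : Type*} [Uncountable ι] {F : ι → α}
    (hF : Injective F) : ¬ (range F).Countable := fun h =>
  not_countable_univ (countable_of_injective_of_countable_image hF.injOn (by rwa [image_univ]))

theorem liYorkeChaotic_wshift_of_injective [CommRing R] [IsDomain R] {w : Γ → R}
    (hw : ∀ i, w (φ^[i] ν) ≠ 0) (hinj : Injective fun n : ℕ => φ^[n] ν) :
    LiYorkeChaotic (wshift φ w) := by
  have hxA : Injective fun f => xA (R := R) φ ν (prefixCodes f) := fun f g heq => by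
    by_contra hfg
    obtain ⟨p, hpf, hpg⟩ := (infinite_prefixCodes_diff hfg).nonempty
    have : xA (R := R) φ ν (prefixCodes f) (φ^[tri p] ν) = xA φ ν (prefixCodes g) (φ^[tri p] ν) :=
      congrFun heq _
    rw [xA_apply_iterate_tri_of_mem hpf, xA_apply_iterate_tri_of_notMem hinj hpg] at this
    exact one_ne_zero this
  have := uncountable_nat_to_bool
  refine ⟨range fun f => xA φ ν (prefixCodes f), not_countable_range_of_injective hxA, ?_⟩
  rintro _ ⟨f, rfl⟩ _ ⟨g, rfl⟩ hne
  exact ⟨proximalPair_xA hinj _ _,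
    not_asymptoticPair_xA hw hinj (infinite_prefixCodes_diff fun h => hne (h ▸ rfl))⟩

end LiYorke

section NoScrambledPairs

variable {φ : Γ → Γ} {w : Γ → R} {x y : Γ → R}

theorem exists_infinite_of_not_asymptoticPair [CommMonoidWithZero R]
    (h : ¬ AsymptoticPair (wshift φ w) x y) :
    ∃ α, {k | orbitWeight φ w k α ≠ 0 ∧ x (φ^[k] α) ≠ y (φ^[k] α)}.Infinite := by
  by_contra! hfin
  refine h fun O ⟨M, hM, hMO⟩ => ?_
  obtain ⟨N, hN⟩ := (hM.biUnion fun α _ => hfin α).bddAbove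
  refine ⟨N + 1, by omega, fun n hn => hMO fun α hα => ?_⟩
  show (wshift φ w)^[n] x α = (wshift φ w)^[n] y α
  rw [wshift_iterate_apply, wshift_iterate_apply]
  by_contra hne
  have hnN := hN (mem_biUnion hα
    ⟨fun h0 => hne (by rw [h0, zero_mul, zero_mul]), fun hxy => hne (by rw [hxy])⟩)
  omega

theorem exists_forall_ge_eq_of_proximalPair [CommRing R] [IsDomain R] {α : Γ}
    (hw : ∀ i, w (φ^[i] α) ≠ 0) {i j : ℕ} (hij : i < j) (h : φ^[i] α = φ^[j] α)
    (hxy : ProximalPair (wshift φ w) x y) : ∃ n, ∀ m ≥ n, x (φ^[m] α) = y (φ^[m] α) := by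
  obtain ⟨n, -, hn⟩ := hxy (shiftOM ((fun k => φ^[k] α) '' Iio j))
    ⟨_, (finite_Iio j).image _, subset_rfl⟩
  refine ⟨n, fun m hm => ?_⟩
  obtain ⟨k, hnk, hkj, hmk⟩ := exists_iterate_eq_of_iterate_eq hij h hm
  have hk := (wshift_iterate_apply_eq_iff (orbitWeight_iterate_ne_zero hw n (k - n))).mp
    (hn _ ⟨k - n, mem_Iio.mpr (by omega), rfl⟩)
  rwa [← iterate_add_apply, Nat.add_sub_cancel' hnk, ← hmk] at hk

theorem not_scrambledPair_wshift [CommRing R] [IsDomain R]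
    (hqp : ∀ ν, (∀ i, w (φ^[i] ν) ≠ 0) → IsQuasiPeriodic φ ν) (x y : Γ → R) :
    ¬ ScrambledPair (wshift φ w) x y := by
  rintro ⟨hprox, hasym⟩
  obtain ⟨α, hα⟩ := exists_infinite_of_not_asymptoticPair hasym
  have hw : ∀ i, w (φ^[i] α) ≠ 0 := fun i => by
    obtain ⟨k, hk, hik⟩ := hα.exists_gt i
    exact orbitWeight_ne_zero_iff.mp hk.1 i hik
  have hninj : ¬ Injective fun n : ℕ => φ^[n] α := fun hinj =>
    injective_iterate_iff_not_isQuasiPeriodic.mp hinj (hqp α hw)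
  obtain ⟨i, j, hij, h⟩ := exists_lt_iterate_eq_of_not_injective hninj
  obtain ⟨n, hn⟩ := exists_forall_ge_eq_of_proximalPair hw hij h hprox
  obtain ⟨m, hm, hnm⟩ := hα.exists_gt n
  exact hm.2 (hn m hnm.le)

end NoScrambledPairs

theorem LiYorkeChaotic.exists_scrambledPair {f : (Γ → R) → (Γ → R)} (h : LiYorkeChaotic f) :
    ∃ x y, ScrambledPair f x y := by
  obtain ⟨A, hA, hscr⟩ := h
  obtain ⟨x, hx, y, hy, hxy⟩ := not_subsingleton_iff.mp (mt Subsingleton.countable hA)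
  exact ⟨x, y, hscr x hx y hy hxy⟩

end WGShift

theorem stmt12_general {R Γ : Type*} [Field R]
    [TopologicalSpace R] [DiscreteTopology R]
    (φ : Γ → Γ) (w : Γ → R) :
    Sensitive (wshift φ w) ↔ LiYorkeChaotic (wshift φ w) := by
  rw [sensitive_wshift_iff]
  constructor
  · rintro ⟨ν, hw, hν⟩
    exact liYorkeChaotic_wshift_of_injective hw (injective_iterate_iff_not_isQuasiPeriodic.mpr hν)
  · intro hly
    obtain ⟨x, y, hxy⟩ := hly.exists_scrambledPair
    by_contra! hqp
    exact not_scrambledPair_wshift hqp x y hxy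

theorem stmt12 {R Γ : Type*} [Field R] [Fintype R]
    [TopologicalSpace R] [DiscreteTopology R] [Nontrivial Γ]
    (φ : Γ → Γ) (w : Γ → R) :
    Sensitive (wshift φ w) ↔ LiYorkeChaotic (wshift φ w) :=
  stmt12_general φ w
end

section
/- Let R be a finite commutative ring with unity equipped with the discrete topology, Γ a set with at least two elements, φ: Γ → Γ a map, and w ∈ R^Γ a weight vector. Then the weighted generalized shift σ_{φ,w}: R^Γ → R^Γ is surjective if and only if the set Per(σ_{φ,w}) of periodic points of σ_{φ,w} is dense in R^Γ (with the product topology). -/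
open Function Set

open WGShift

/-! Surjectivity of `σ = wshift φ w` forces every weight to be a unit and, when `R ≠ 0`, `φ` to be
injective; conversely periodic points lie in the range of `σ`, which is compact, hence closed.

For density, note `σ^N = wshift φ^N W_N` with `W_N` the Birkhoff product of `w` along `φ`. A fixed
point of this map taking the value `c` at `β` is obtained by spreading `c` over the grand orbit of
`β` under `ψ = φ^N`: `x γ = c * W(a, γ) / W(b, β)` whenever `ψ^a γ = ψ^b β`. We choose `N` so that
this is well defined and the grand orbit misses the other finitely many prescribed coordinates: a
multiple of the period of `β` on which the weight of its cycle becomes `1` if `β` is periodic, any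
large `N` otherwise. Finite sums of such points are periodic and match any given point on a finite
set of coordinates. -/

open Filter

section BirkhoffProd

variable {α M : Type*} [CommMonoid M]

def birkhoffProd (f : α → α) (g : α → M) (n : ℕ) (x : α) : M :=
  ∏ k ∈ Finset.range n, g (f^[k] x)

theorem birkhoffProd_zero (f : α → α) (g : α → M) (x : α) : birkhoffProd f g 0 x = 1 :=
  Finset.prod_range_zero _

theorem birkhoffProd_succ' (f : α → α) (g : α → M) (n : ℕ) (x : α) :
    birkhoffProd f g (n + 1) x = g x * birkhoffProd f g n (f x) :=
  (Finset.prod_range_succ' _ _).trans (mul_comm _ _)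

theorem birkhoffProd_add (f : α → α) (g : α → M) (m n : ℕ) (x : α) :
    birkhoffProd f g (m + n) x = birkhoffProd f g m x * birkhoffProd f g n (f^[m] x) := by
  simp_rw [birkhoffProd, Finset.prod_range_add, add_comm m, iterate_add_apply]

theorem birkhoffProd_mul (f : α → α) (g : α → M) (m n : ℕ) (x : α) :
    birkhoffProd f g (m * n) x = birkhoffProd f^[m] (birkhoffProd f g m) n x := by
  induction n generalizing x with
  | zero => rfl
  | succ n ih =>
    rw [Nat.mul_succ, add_comm, birkhoffProd_add, ih, birkhoffProd_succ']

theorem Function.IsFixedPt.birkhoffProd_eq {f : α → α} {x : α} (h : IsFixedPt f x) (g : α → M)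
    (n : ℕ) : birkhoffProd f g n x = g x ^ n := by
  simp [birkhoffProd, (h.iterate _).eq]

theorem map_birkhoffProd {N : Type*} [CommMonoid N] (F : M →* N) (f : α → α) (g : α → M) (n : ℕ)
    (x : α) : F (birkhoffProd f g n x) = birkhoffProd f (F ∘ g) n x :=
  map_prod F _ _

end BirkhoffProd

section Orbits

variable {α : Type*} {f : α → α}

theorem exists_iterate_eq_or_iterate_eq (hf : Injective f) {a b : ℕ} {x y : α}
    (h : f^[a] x = f^[b] y) : ∃ k, f^[k] x = y ∨ f^[k] y = x := by
  rcases le_total a b with hab | hab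
  · obtain ⟨k, rfl⟩ := Nat.exists_eq_add_of_le hab
    rw [iterate_add_apply] at h
    exact ⟨k, Or.inr (hf.iterate a h).symm⟩
  · obtain ⟨k, rfl⟩ := Nat.exists_eq_add_of_le hab
    rw [iterate_add_apply] at h
    exact ⟨k, Or.inl (hf.iterate b h)⟩

theorem injective_iterate_apply_of_notMem_periodicPts (hf : Injective f) {x : α}
    (hx : x ∉ periodicPts f) : Injective fun n => f^[n] x := by
  suffices ∀ m k, f^[m + k] x = f^[m] x → k = 0 by
    intro m n h
    rcases le_total m n with hmn | hmn
    · obtain ⟨k, rfl⟩ := Nat.exists_eq_add_of_le hmn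
      simp [this m k h.symm]
    · obtain ⟨k, rfl⟩ := Nat.exists_eq_add_of_le hmn
      simp [this n k h]
  intro m k h
  rw [iterate_add_apply] at h
  by_contra hk
  exact hx (mk_mem_periodicPts (Nat.pos_of_ne_zero hk) (hf.iterate m h))

theorem eventually_iterate_ne_of_notMem_periodicPts (hf : Injective f) {x : α}
    (hx : x ∉ periodicPts f) (y : α) : ∀ᶠ n in atTop, f^[n] y ≠ x ∧ f^[n] x ≠ y := by
  refine .and ?_ ?_
  · by_cases hy : ∃ m, f^[m] y = x
    · obtain ⟨m, rfl⟩ := hy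
      filter_upwards [eventually_gt_atTop m] with n hn
      obtain ⟨k, rfl⟩ : ∃ k, n = k + 1 + m := ⟨n - m - 1, by omega⟩
      intro h
      rw [iterate_add_apply] at h
      exact hx (mk_mem_periodicPts k.succ_pos h)
    · exact .of_forall (not_exists.mp hy)
  · have := (injective_iterate_apply_of_notMem_periodicPts hf hx).tendsto_cofinite
    rw [Nat.cofinite_eq_atTop] at this
    exact this.eventually (Set.Finite.compl_mem_cofinite (Set.finite_singleton y))

theorem exists_isFixedPt_iterate_birkhoffProd_eq_one {G : Type*} [CommGroup G] [Finite G]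
    {x : α} (hx : x ∈ periodicPts f) (g : α → G) :
    ∃ N > 0, IsFixedPt f^[N] x ∧ birkhoffProd f g N x = 1 := by
  obtain ⟨p, hp, hpx⟩ := hx
  refine ⟨p * orderOf (birkhoffProd f g p x), Nat.mul_pos hp (orderOf_pos _), hpx.mul_const _, ?_⟩
  rw [birkhoffProd_mul, IsFixedPt.birkhoffProd_eq hpx, pow_orderOf_eq_one]

theorem birkhoffProd_div_eq_of_iterate_eq {G : Type*} [CommGroup G] {g : α → G} {x y : α}
    (hy : ∀ m n, f^[m] y = f^[n] y → birkhoffProd f g m y = birkhoffProd f g n y)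
    {a b a' b' : ℕ} (h : f^[a] x = f^[b] y) (h' : f^[a'] x = f^[b'] y) :
    birkhoffProd f g a x / birkhoffProd f g b y = birkhoffProd f g a' x / birkhoffProd f g b' y := by
  wlog hle : a ≤ a' generalizing a b a' b'
  · exact (this h' h (le_of_not_ge hle)).symm
  obtain ⟨k, rfl⟩ := Nat.exists_eq_add_of_le hle
  have hb : f^[b + k] y = f^[b'] y := by
    rw [add_comm, iterate_add_apply, ← h, ← iterate_add_apply, add_comm, h']
  rw [← hy _ _ hb, birkhoffProd_add, birkhoffProd_add, h, mul_div_mul_right_eq_div]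

end Orbits

theorem dense_of_forall_finset_exists_eq {ι : Type*} {X : ι → Type*} [∀ i, TopologicalSpace (X i)]
    {S : Set (∀ i, X i)} (h : ∀ (z : ∀ i, X i) (I : Finset ι), ∃ x ∈ S, ∀ i ∈ I, x i = z i) :
    Dense S := by
  rw [dense_iff_inter_open]
  rintro U hU ⟨z, hz⟩
  obtain ⟨I, u, hu, hsub⟩ := isOpen_pi_iff.1 hU z hz
  obtain ⟨x, hxS, hx⟩ := h z I
  exact ⟨x, hsub fun i hi => hx i hi ▸ (hu i hi).2, hxS⟩

theorem surjective_of_dense_periodicPts {X : Type*} [TopologicalSpace X] [CompactSpace X]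
    [T2Space X] {f : X → X} (hf : Continuous f) (h : Dense (periodicPts f)) : Surjective f := by
  rw [← range_eq_univ, ← (isCompact_range hf).isClosed.closure_eq]
  exact (h.mono periodicPts_subset_range).closure_eq

namespace WGShift

variable {Γ R : Type*}

theorem perPoints_eq_periodicPts (f : (Γ → R) → (Γ → R)) : perPoints f = periodicPts f := rfl

theorem wshift_iterate [CommMonoid R] (φ : Γ → Γ) (w : Γ → R) (n : ℕ) :
    (wshift φ w)^[n] = wshift φ^[n] (birkhoffProd φ w n) := by
  induction n with
  | zero => funext x γ; simp [wshift, birkhoffProd_zero]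
  | succ n ih =>
    funext x γ
    rw [iterate_succ_apply', ih]
    simp only [wshift, birkhoffProd_succ', iterate_succ_apply, mul_assoc]

theorem wshift_add [Distrib R] (φ : Γ → Γ) (w : Γ → R) (x y : Γ → R) :
    wshift φ w (x + y) = wshift φ w x + wshift φ w y :=
  funext fun _ => mul_add _ _ _

theorem continuous_wshift [Mul R] [TopologicalSpace R] [ContinuousMul R] (φ : Γ → Γ)
    (w : Γ → R) : Continuous (wshift φ w) :=
  continuous_pi fun α => continuous_const.mul (continuous_apply (φ α))

theorem zero_mem_perPoints_wshift [MulZeroClass R] (φ : Γ → Γ) (w : Γ → R) :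
    0 ∈ perPoints (wshift φ w) :=
  ⟨1, le_rfl, funext fun _ => mul_zero _⟩

theorem add_mem_perPoints_wshift [CommSemiring R] {φ : Γ → Γ} {w : Γ → R} {x y : Γ → R}
    (hx : x ∈ perPoints (wshift φ w)) (hy : y ∈ perPoints (wshift φ w)) :
    x + y ∈ perPoints (wshift φ w) := by
  obtain ⟨m, hm, hmx⟩ := hx
  obtain ⟨n, hn, hny⟩ := hy
  refine ⟨m * n, Nat.mul_pos hm hn, ?_⟩
  rw [wshift_iterate, wshift_add, ← wshift_iterate, (IsPeriodicPt.mul_const hmx n).eq,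
    (IsPeriodicPt.const_mul hny m).eq]

theorem isUnit_of_surjective_wshift [CommMonoid R] {φ : Γ → Γ} {w : Γ → R}
    (h : Surjective (wshift φ w)) (α : Γ) : IsUnit (w α) := by
  obtain ⟨x, hx⟩ := h 1
  exact .of_mul_eq_one _ (congrFun hx α)

theorem injective_of_surjective_wshift [CommMonoidWithZero R] [Nontrivial R] {φ : Γ → Γ}
    {w : Γ → R} (h : Surjective (wshift φ w)) : Injective φ := by
  classical
  intro α β hαβ
  by_contra hne
  obtain ⟨x, hx⟩ := h (Pi.single α 1)
  have hα : w α * x (φ α) = 1 := by simpa [wshift] using congrFun hx α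
  have hβ : w β * x (φ α) = 0 := by simpa [wshift, hαβ, Ne.symm hne] using congrFun hx β
  exact (isUnit_of_surjective_wshift h β).ne_zero
    ((IsUnit.of_mul_eq_one_right _ hα).mul_left_eq_zero.1 hβ)

theorem exists_isFixedPt_wshift [CommMonoidWithZero R] {ψ : Γ → Γ} {u : Γ → Rˣ} {β : Γ}
    (hβ : ∀ m n, ψ^[m] β = ψ^[n] β → birkhoffProd ψ u m β = birkhoffProd ψ u n β) (c : R) :
    ∃ x, IsFixedPt (wshift ψ fun γ => (u γ : R)) x ∧ x β = c ∧
      ∀ γ, (∀ a b, ψ^[a] γ ≠ ψ^[b] β) → x γ = 0 := by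
  classical
  let x : Γ → R := fun γ =>
    if h : ∃ p : ℕ × ℕ, ψ^[p.1] γ = ψ^[p.2] β then
      c * ↑(birkhoffProd ψ u h.choose.1 γ / birkhoffProd ψ u h.choose.2 β)
    else 0
  have hx : ∀ γ a b, ψ^[a] γ = ψ^[b] β →
      x γ = c * ↑(birkhoffProd ψ u a γ / birkhoffProd ψ u b β) := by
    intro γ a b h
    have hex : ∃ p : ℕ × ℕ, ψ^[p.1] γ = ψ^[p.2] β := ⟨(a, b), h⟩
    simp only [x, dif_pos hex, birkhoffProd_div_eq_of_iterate_eq hβ hex.choose_spec h]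
  have hx0 : ∀ γ, (∀ a b, ψ^[a] γ ≠ ψ^[b] β) → x γ = 0 :=
    fun γ hγ => dif_neg fun ⟨p, hp⟩ => hγ p.1 p.2 hp
  refine ⟨x, funext fun γ => ?_, by simpa [birkhoffProd_zero] using hx β 0 0 rfl, hx0⟩
  change (u γ : R) * x (ψ γ) = x γ
  by_cases hγ : ∃ a b, ψ^[a] (ψ γ) = ψ^[b] β
  · obtain ⟨a, b, h⟩ := hγ
    rw [hx _ a b h, hx γ (a + 1) b (by rwa [iterate_succ_apply]), birkhoffProd_succ',
      mul_div_assoc, Units.val_mul, mul_left_comm]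
  · have hγ' : ∀ a b, ψ^[a] γ ≠ ψ^[b] β := fun a b h => hγ ⟨a, b + 1, by
      rw [← iterate_succ_apply, iterate_succ_apply', h, iterate_succ_apply']⟩
    rw [hx0 _ fun a b h => hγ ⟨a, b, h⟩, hx0 γ hγ', mul_zero]

theorem exists_period_separating {G : Type*} [CommGroup G] [Finite G] {φ : Γ → Γ}
    (hφ : Injective φ) (g : Γ → G) (β : Γ) (I : Finset Γ) :
    ∃ N > 0, (∀ m n, (φ^[N])^[m] β = (φ^[N])^[n] β →
        birkhoffProd φ^[N] (birkhoffProd φ g N) m β = birkhoffProd φ^[N] (birkhoffProd φ g N) n β) ∧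
      ∀ i ∈ I, i ≠ β → ∀ k, (φ^[N])^[k] i ≠ β ∧ (φ^[N])^[k] β ≠ i := by
  by_cases hβ : β ∈ periodicPts φ
  · obtain ⟨N, hN, hfix, hone⟩ := exists_isFixedPt_iterate_birkhoffProd_eq_one hβ g
    have hfix' (k : ℕ) : (φ^[N])^[k] β = β := (hfix.iterate k).eq
    refine ⟨N, hN, fun m n _ => by simp only [hfix.birkhoffProd_eq, hone, one_pow],
      fun i _ hi k => ⟨fun h => hi ((hφ.iterate N).iterate k (h.trans (hfix' k).symm)), ?_⟩⟩
    rw [hfix']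
    exact hi.symm
  · obtain ⟨N₀, hN₀⟩ := eventually_atTop.1 <|
      (eventually_all_finset I).2 fun i _ => eventually_iterate_ne_of_notMem_periodicPts hφ hβ i
    refine ⟨N₀ + 1, N₀.succ_pos, fun m n h => ?_, fun i hi hne k => ?_⟩
    · rw [← iterate_mul, ← iterate_mul] at h
      rw [Nat.eq_of_mul_eq_mul_left N₀.succ_pos
        (injective_iterate_apply_of_notMem_periodicPts hφ hβ h)]
    · rcases k with _ | k
      · exact ⟨hne, Ne.symm hne⟩
      · rw [← iterate_mul]
        exact hN₀ _ ((Nat.le_succ N₀).trans (Nat.le_mul_of_pos_right _ k.succ_pos)) i hi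

theorem exists_mem_perPoints_wshift_eq_single [CommMonoidWithZero R] [Finite R] {φ : Γ → Γ}
    (hφ : Injective φ) (u : Γ → Rˣ) (β : Γ) (I : Finset Γ) (c : R) :
    ∃ x ∈ perPoints (wshift φ fun γ => (u γ : R)), x β = c ∧ ∀ i ∈ I, i ≠ β → x i = 0 := by
  obtain ⟨N, hN, hβ, hsep⟩ := exists_period_separating hφ u β I
  obtain ⟨x, hfix, hxβ, hx0⟩ := exists_isFixedPt_wshift hβ c
  refine ⟨x, ⟨N, hN, ?_⟩, hxβ, fun i hi hne => hx0 i fun a b h => ?_⟩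
  · have hcoe : birkhoffProd φ (fun γ => (u γ : R)) N = fun γ => ↑(birkhoffProd φ u N γ) :=
      funext fun γ => (map_birkhoffProd (Units.coeHom R) _ _ _ _).symm
    rwa [wshift_iterate, hcoe]
  · obtain ⟨k, hk | hk⟩ := exists_iterate_eq_or_iterate_eq (hφ.iterate N) h
    exacts [(hsep i hi hne k).1 hk, (hsep i hi hne k).2 hk]

theorem dense_perPoints_wshift [CommSemiring R] [Finite R] [TopologicalSpace R] {φ : Γ → Γ}
    (hφ : Injective φ) (u : Γ → Rˣ) : Dense (perPoints (wshift φ fun γ => (u γ : R))) := by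
  classical
  refine dense_of_forall_finset_exists_eq fun z I => ?_
  choose x hx hxβ hx0 using fun β => exists_mem_perPoints_wshift_eq_single hφ u β I (z β)
  refine ⟨∑ β ∈ I, x β, Finset.sum_induction _ _ (fun _ _ => add_mem_perPoints_wshift)
    (zero_mem_perPoints_wshift _ _) fun β _ => hx β, fun i hi => ?_⟩
  rw [Finset.sum_apply, Finset.sum_eq_single_of_mem i hi fun β _ hβi => hx0 β i hi hβi.symm, hxβ]

end WGShift

theorem stmt15_general {R Γ : Type*} [CommRing R] [Fintype R]
    [TopologicalSpace R] [DiscreteTopology R]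
    (φ : Γ → Γ) (w : Γ → R) :
    Function.Surjective (wshift φ w) ↔ Dense (perPoints (wshift φ w)) := by
  refine ⟨fun h => ?_, fun h =>
    surjective_of_dense_periodicPts (continuous_wshift φ w) (perPoints_eq_periodicPts _ ▸ h)⟩
  rcases subsingleton_or_nontrivial R with hR | hR
  · exact fun y => subset_closure (Subsingleton.elim 0 y ▸ zero_mem_perPoints_wshift φ w)
  · have hφ := injective_of_surjective_wshift h
    lift w to Γ → Rˣ using isUnit_of_surjective_wshift h
    exact dense_perPoints_wshift hφ w

theorem stmt15 {R Γ : Type*} [CommRing R] [Fintype R]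
    [TopologicalSpace R] [DiscreteTopology R] [Nontrivial Γ]
    (φ : Γ → Γ) (w : Γ → R) :
    Function.Surjective (wshift φ w) ↔ Dense (perPoints (wshift φ w)) :=
  stmt15_general φ w
end
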